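/- If r ∈ A is lex-optimal, then for every edge (i,j) ∈ E the sharing ratios of its endpoints satisfy ρ_i(r) · ρ_j(r) ≥ 1; equivalently, for every node i and every neighbor j ∈ N_i, ρ_j(r) ≥ 1/ρ_i(r). -/

import Mathlib

open Finset
open scoped Classical

noncomputable section

namespace SharingEcon

variable {V : Type*} [Fintype V] [DecidableEq V]

/-- The set of neighbors of a set of nodes: `N_S = ⋃ i ∈ S, N_i`. -/
def nbrs (G : SimpleGraph V) [DecidableRel G.Adj] (S : Finset V) : Finset V :=
  S.biUnion fun i => G.neighborFinset i

/-- The set function `f(S) = ∑_{j ∈ N_S} D_j`. -/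
def fS (G : SimpleGraph V) [DecidableRel G.Adj] (D : V → ℝ) (S : Finset V) : ℝ :=
  ∑ j ∈ nbrs G S, D j

/-- The polymatroid polyhedron `A` of a set function `f`. -/
def polyA (f : Finset V → ℝ) : Set (V → ℝ) :=
  {r | (∀ i, 0 ≤ r i) ∧ ∀ S : Finset V, ∑ i ∈ S, r i ≤ f S}

/-- The base `A₀` of the polymatroid. -/
def polyBase (f : Finset V → ℝ) : Set (V → ℝ) :=
  {r | r ∈ polyA f ∧ ∑ i, r i = f Finset.univ}

/-- The coordinates of a vector sorted in nondecreasing order. -/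
def sortedVec (x : V → ℝ) : List ℝ :=
  (Finset.univ.val.map x).sort (· ≤ ·)

/-- `x` is lexicographically at least `y` (comparing sorted coordinate vectors). -/
def lexGE (x y : V → ℝ) : Prop :=
  sortedVec x = sortedVec y ∨
    ∃ k : ℕ, (∀ j < k, (sortedVec x).getD j 0 = (sortedVec y).getD j 0) ∧
      (sortedVec y).getD k 0 < (sortedVec x).getD k 0

/-- `r` is lexicographically optimal in `A` for the sharing-ratio vectors `(r i / D i)`. -/
def LexOptimal (A : Set (V → ℝ)) (D : V → ℝ) (r : V → ℝ) : Prop :=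
  r ∈ A ∧ ∀ r' ∈ A, lexGE (fun i => r i / D i) (fun i => r' i / D i)

/-- The sharing ratio of node `i`. -/
def ratio (D r : V → ℝ) (i : V) : ℝ := r i / D i

/-- The distinct values of the sharing ratios, sorted increasingly. -/
def vals (D r : V → ℝ) : List ℝ :=
  (Finset.univ.image (ratio D r)).sort (· ≤ ·)

/-- The number `K(r)` of distinct sharing-ratio values. -/
def numLevels (D r : V → ℝ) : ℕ := (vals D r).length

/-- The `k`-th smallest distinct ratio value `v_k(r)` (1-indexed). -/
def v (D r : V → ℝ) (k : ℕ) : ℝ := (vals D r).getD (k - 1) 0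

/-- The `k`-th level set `L_k(r)` (1-indexed). -/
def level (D r : V → ℝ) (k : ℕ) : Finset V :=
  Finset.univ.filter fun i => ratio D r i = v D r k

end SharingEcon

set_option linter.unusedSectionVars false
set_option maxHeartbeats 1600000

namespace SharingEcon

section Aux
variable {V : Type*} [Fintype V] [DecidableEq V]


/-- strict lex-less for (sorted) real lists, in the `getD`-style of `lexGE`. -/
def LLT (s t : List ℝ) : Prop :=
  ∃ k : ℕ, (∀ j < k, s.getD j 0 = t.getD j 0) ∧ s.getD k 0 < t.getD k 0

lemma LLT_ne {s t : List ℝ} (h : LLT s t) : s ≠ t := by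
  rintro rfl
  obtain ⟨k, -, hk⟩ := h
  exact lt_irrefl _ hk

lemma LLT_asymm {s t : List ℝ} (h : LLT s t) (h' : LLT t s) : False := by
  obtain ⟨k, hpre, hk⟩ := h
  obtain ⟨k', hpre', hk'⟩ := h'
  rcases lt_trichotomy k k' with hlt | rfl | hgt
  · exact hk.ne' (hpre' k hlt)
  · exact lt_irrefl _ (hk.trans hk')
  · exact hk'.ne' (hpre k' hgt)

lemma LLT_aux :
    ∀ (s t : List ℝ), List.Pairwise (· ≤ ·) s → List.Pairwise (· ≤ ·) t →
      s.length = t.length → ∀ a : ℝ,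
      (∀ x : ℝ, x < a → Multiset.count x (↑s : Multiset ℝ) = Multiset.count x (↑t : Multiset ℝ)) →
      Multiset.count a (↑t : Multiset ℝ) < Multiset.count a (↑s : Multiset ℝ) →
      LLT s t := by
  intro s
  induction s with
  | nil =>
    intro t _ _ _ a _ hgt
    simp at hgt
  | cons h₁ s₁ ih =>
    intro t hs ht hlen a hlt hgt
    cases t with
    | nil => simp at hlen
    | cons h₂ t₁ =>
      have hs₁ : List.Pairwise (· ≤ ·) s₁ := (List.pairwise_cons.mp hs).2
      have ht₁ : List.Pairwise (· ≤ ·) t₁ := (List.pairwise_cons.mp ht).2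
      have hsb : ∀ b ∈ s₁, h₁ ≤ b := (List.pairwise_cons.mp hs).1
      have htb : ∀ b ∈ t₁, h₂ ≤ b := (List.pairwise_cons.mp ht).1
      rcases lt_trichotomy h₁ h₂ with hlt12 | heq | hgt12
      · exact ⟨0, by intro j hj; omega, by simpa using hlt12⟩
      · subst heq
        have hcount : ∀ x : ℝ, x < a →
            Multiset.count x (↑s₁ : Multiset ℝ) = Multiset.count x (↑t₁ : Multiset ℝ) := by
          intro x hx
          have := hlt x hx
          rw [← Multiset.cons_coe, ← Multiset.cons_coe, Multiset.count_cons,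
            Multiset.count_cons] at this
          omega
        have hcnt2 : Multiset.count a (↑t₁ : Multiset ℝ) <
            Multiset.count a (↑s₁ : Multiset ℝ) := by
          have := hgt
          rw [← Multiset.cons_coe, ← Multiset.cons_coe, Multiset.count_cons,
            Multiset.count_cons] at this
          omega
        obtain ⟨k, hpre, hk⟩ := ih t₁ hs₁ ht₁ (by simpa using hlen) a hcount hcnt2
        refine ⟨k + 1, ?_, ?_⟩
        · intro j hj
          cases j with
          | zero => simp
          | succ j => simpa using hpre j (by omega)
        · simpa using hk
      · exfalso
        by_cases hc : h₂ < a
        · have hce := hlt h₂ hc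
          have hmem : h₂ ∈ (↑(h₂ :: t₁) : Multiset ℝ) := by simp
          have hposT : 0 < Multiset.count h₂ (↑(h₂ :: t₁) : Multiset ℝ) :=
            Multiset.count_pos.mpr hmem
          have hmem' : h₂ ∈ (↑(h₁ :: s₁) : Multiset ℝ) := by
            refine Multiset.count_pos.mp ?_
            rw [hce]; exact hposT
          have : h₂ ∈ h₁ :: s₁ := by simpa using hmem'
          rcases List.mem_cons.mp this with h | h
          · exact absurd h (ne_of_lt hgt12)
          · exact absurd (hsb _ h) (by linarith)
        · push_neg at hc
          have hmem : a ∈ (↑(h₁ :: s₁) : Multiset ℝ) :=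
            Multiset.count_pos.mp (lt_of_le_of_lt (Nat.zero_le _) hgt)
          have : a ∈ h₁ :: s₁ := by simpa using hmem
          rcases List.mem_cons.mp this with h | h
          · subst h; linarith
          · have := hsb _ h; linarith




lemma not_lexGE_of_LLT {x y : V → ℝ} (hL : LLT (sortedVec x) (sortedVec y)) :
    ¬ lexGE x y := by
  rintro (heq | ⟨k, hp, hk⟩)
  · exact LLT_ne hL heq
  · exact LLT_asymm hL ⟨k, fun j hj => (hp j hj).symm, hk⟩

lemma sortedVec_sorted (x : V → ℝ) : List.Pairwise (· ≤ ·) (sortedVec x) :=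
  Multiset.pairwise_sort _ _

lemma sortedVec_coe (x : V → ℝ) :
    (↑(sortedVec x) : Multiset ℝ) = Finset.univ.val.map x :=
  Multiset.sort_eq _ _

lemma sortedVec_length (x : V → ℝ) : (sortedVec x).length = Fintype.card V := by
  simp [sortedVec]

lemma count_sortedVec (x : V → ℝ) (c : ℝ) :
    Multiset.count c (↑(sortedVec x) : Multiset ℝ) =
      Multiset.count c (Finset.univ.val.map x) := by
  rw [sortedVec_coe]

/-- one-point increase gives strict lex improvement -/
lemma LLT_update (x : V → ℝ) (k : V) (c : ℝ) (hc : x k < c) :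
    LLT (sortedVec x) (sortedVec (Function.update x k c)) := by
  have hkmem : k ∈ Finset.univ.val := by simp
  set m : Multiset V := Finset.univ.val.erase k with hmdef
  have hm : Finset.univ.val = k ::ₘ m := (Multiset.cons_erase hkmem).symm
  have hnodup : Finset.univ.val.Nodup := (Finset.univ : Finset V).nodup
  have hcle : Multiset.count k (Finset.univ.val) ≤ 1 :=
    Multiset.nodup_iff_count_le_one.mp hnodup k
  have hk0 : Multiset.count k m = 0 := by
    rw [hm, Multiset.count_cons_self] at hcle
    omega
  have hmap : Multiset.map (Function.update x k c) m = Multiset.map x m := by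
    apply Multiset.map_congr rfl
    intro z hz
    have hzk : z ≠ k := by
      rintro rfl
      have := Multiset.count_pos.mpr hz
      omega
    exact Function.update_of_ne hzk _ _
  apply LLT_aux _ _ (sortedVec_sorted _) (sortedVec_sorted _)
    (by rw [sortedVec_length, sortedVec_length]) (x k)
  · intro y hy
    rw [count_sortedVec, count_sortedVec, hm, Multiset.map_cons, Multiset.map_cons,
      Multiset.count_cons, Multiset.count_cons, hmap, Function.update_self]
    have h1 : y ≠ x k := ne_of_lt hy
    have h2 : y ≠ c := ne_of_lt (lt_trans hy hc)
    simp [h1, h2]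
  · rw [count_sortedVec, count_sortedVec, hm, Multiset.map_cons, Multiset.map_cons,
      Multiset.count_cons, Multiset.count_cons, hmap, Function.update_self]
    have h2 : x k ≠ c := ne_of_lt hc
    simp [h2]

/-- two-point (raise low one, lower high one but keep above the low) strict improvement -/
lemma LLT_update2 (x : V → ℝ) (k w : V) (hne : w ≠ k) (ck cw : ℝ)
    (h1 : x k < ck) (h2 : x k < cw) (h3 : x k < x w) :
    LLT (sortedVec x) (sortedVec (Function.update (Function.update x w cw) k ck)) := by
  have hkmem : k ∈ Finset.univ.val := by simp
  have hwmem' : w ∈ Finset.univ.val.erase k :=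
    (Multiset.mem_erase_of_ne hne).mpr (by simp)
  set m : Multiset V := (Finset.univ.val.erase k).erase w with hmdef
  have hm1 : Finset.univ.val.erase k = w ::ₘ m := (Multiset.cons_erase hwmem').symm
  have hm : Finset.univ.val = k ::ₘ w ::ₘ m := by
    rw [← hm1]; exact (Multiset.cons_erase hkmem).symm
  have hnodup : Finset.univ.val.Nodup := (Finset.univ : Finset V).nodup
  have hcount_le : ∀ z : V, Multiset.count z (Finset.univ.val) ≤ 1 :=
    Multiset.nodup_iff_count_le_one.mp hnodup
  have hk0 : Multiset.count k m = 0 := by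
    have := hcount_le k
    rw [hm, Multiset.count_cons_self, Multiset.count_cons] at this
    omega
  have hw0 : Multiset.count w m = 0 := by
    have := hcount_le w
    rw [hm, Multiset.count_cons, Multiset.count_cons_self] at this
    omega
  set x' := Function.update (Function.update x w cw) k ck with hx'
  have hx'k : x' k = ck := Function.update_self _ _ _
  have hx'w : x' w = cw := by
    rw [hx', Function.update_of_ne hne, Function.update_self]
  have hmap : Multiset.map x' m = Multiset.map x m := by
    apply Multiset.map_congr rfl
    intro z hz
    have hzk : z ≠ k := by rintro rfl; have := Multiset.count_pos.mpr hz; omega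
    have hzw : z ≠ w := by rintro rfl; have := Multiset.count_pos.mpr hz; omega
    rw [hx', Function.update_of_ne hzk, Function.update_of_ne hzw]
  apply LLT_aux _ _ (sortedVec_sorted _) (sortedVec_sorted _)
    (by rw [sortedVec_length, sortedVec_length]) (x k)
  · intro y hy
    rw [count_sortedVec, count_sortedVec, hm]
    rw [Multiset.map_cons, Multiset.map_cons, Multiset.map_cons, Multiset.map_cons,
      Multiset.count_cons, Multiset.count_cons, Multiset.count_cons, Multiset.count_cons,
      hmap, hx'k, hx'w]
    have e1 : y ≠ x k := ne_of_lt hy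
    have e2 : y ≠ x w := ne_of_lt (lt_trans hy h3)
    have e3 : y ≠ ck := ne_of_lt (lt_trans hy h1)
    have e4 : y ≠ cw := ne_of_lt (lt_trans hy h2)
    simp [e1, e2, e3, e4]
  · rw [count_sortedVec, count_sortedVec, hm]
    rw [Multiset.map_cons, Multiset.map_cons, Multiset.map_cons, Multiset.map_cons,
      Multiset.count_cons, Multiset.count_cons, Multiset.count_cons, Multiset.count_cons,
      hmap, hx'k, hx'w]
    have e1 : x k ≠ ck := ne_of_lt h1
    have e2 : x k ≠ cw := ne_of_lt h2
    have e0 : x k ≠ x w := ne_of_lt h3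
    simp [e1, e2, e0]




section Main

variable (G : SimpleGraph V) [DecidableRel G.Adj] (D : V → ℝ) (r : V → ℝ)

/-- tightness of a set -/
def Tight (S : Finset V) : Prop := ∑ i ∈ S, r i = fS G D S

lemma mem_nbrs {S : Finset V} {z : V} : z ∈ nbrs G S ↔ ∃ i ∈ S, G.Adj i z := by
  simp [nbrs, SimpleGraph.mem_neighborFinset]

lemma nbrs_union (S T : Finset V) : nbrs G (S ∪ T) = nbrs G S ∪ nbrs G T := by
  ext z
  simp only [mem_nbrs, Finset.mem_union]
  constructor
  · rintro ⟨i, hi | hi, ha⟩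
    · exact Or.inl ⟨i, hi, ha⟩
    · exact Or.inr ⟨i, hi, ha⟩
  · rintro (⟨i, hi, ha⟩ | ⟨i, hi, ha⟩)
    · exact ⟨i, Or.inl hi, ha⟩
    · exact ⟨i, Or.inr hi, ha⟩

lemma nbrs_mono {S T : Finset V} (h : S ⊆ T) : nbrs G S ⊆ nbrs G T := by
  intro z hz
  rw [mem_nbrs] at hz ⊢
  obtain ⟨i, hi, ha⟩ := hz
  exact ⟨i, h hi, ha⟩

lemma nbrs_inter_subset (S T : Finset V) : nbrs G (S ∩ T) ⊆ nbrs G S ∩ nbrs G T := by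
  intro z hz
  rw [Finset.mem_inter]
  exact ⟨nbrs_mono G (Finset.inter_subset_left) hz, nbrs_mono G (Finset.inter_subset_right) hz⟩

lemma Dsum_mono (hD : ∀ i, 0 < D i) {S T : Finset V} (h : S ⊆ T) :
    ∑ i ∈ S, D i ≤ ∑ i ∈ T, D i :=
  Finset.sum_le_sum_of_subset_of_nonneg h (fun i _ _ => (hD i).le)

lemma fS_submod (hD : ∀ i, 0 < D i) (S T : Finset V) :
    fS G D (S ∪ T) + fS G D (S ∩ T) ≤ fS G D S + fS G D T := by
  have h2 : fS G D (S ∩ T) ≤ ∑ j ∈ nbrs G S ∩ nbrs G T, D j :=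
    Dsum_mono D hD (nbrs_inter_subset G S T)
  have h3 : ∑ j ∈ nbrs G S ∪ nbrs G T, D j + ∑ j ∈ nbrs G S ∩ nbrs G T, D j
      = fS G D S + fS G D T := Finset.sum_union_inter
  have h1 : fS G D (S ∪ T) = ∑ j ∈ nbrs G S ∪ nbrs G T, D j := by
    rw [fS, nbrs_union]
  linarith

lemma tight_union (hD : ∀ i, 0 < D i) (hfeas : ∀ S : Finset V, ∑ i ∈ S, r i ≤ fS G D S)
    {S T : Finset V} (hS : Tight G D r S) (hT : Tight G D r T) :
    Tight G D r (S ∪ T) := by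
  have hsum : ∑ i ∈ S ∪ T, r i + ∑ i ∈ S ∩ T, r i = ∑ i ∈ S, r i + ∑ i ∈ T, r i :=
    Finset.sum_union_inter
  have h1 := hfeas (S ∪ T)
  have h2 := hfeas (S ∩ T)
  have h3 := fS_submod G D hD S T
  unfold Tight at hS hT ⊢
  linarith

lemma tight_inter (hD : ∀ i, 0 < D i) (hfeas : ∀ S : Finset V, ∑ i ∈ S, r i ≤ fS G D S)
    {S T : Finset V} (hS : Tight G D r S) (hT : Tight G D r T) :
    Tight G D r (S ∩ T) := by
  have hsum : ∑ i ∈ S ∪ T, r i + ∑ i ∈ S ∩ T, r i = ∑ i ∈ S, r i + ∑ i ∈ T, r i :=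
    Finset.sum_union_inter
  have h1 := hfeas (S ∪ T)
  have h2 := hfeas (S ∩ T)
  have h3 := fS_submod G D hD S T
  unfold Tight at hS hT ⊢
  linarith

end Main

section Perturb

variable (G : SimpleGraph V) [DecidableRel G.Adj] (D : V → ℝ) (r : V → ℝ)
/-- every node lies in some tight set -/
lemma exists_tight_mem (hD : ∀ i, 0 < D i) (hlex : LexOptimal (polyA (fS G D)) D r) (k : V) : ∃ S : Finset V, Tight G D r S ∧ k ∈ S := by
  obtain ⟨⟨hr0, hfeas⟩, hopt⟩ := hlex
  by_contra hno
  push_neg at hno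
  have hnt : ∀ S : Finset V, k ∈ S → ∑ i ∈ S, r i < fS G D S := by
    intro S hk
    exact lt_of_le_of_ne (hfeas S) (fun h => hno S h hk)
  set F : Finset (Finset V) := Finset.univ.powerset.filter (fun S => k ∈ S) with hF
  have hFne : F.Nonempty := ⟨{k}, by simp [hF]⟩
  set E : Finset ℝ := F.image (fun S => fS G D S - ∑ i ∈ S, r i) with hE
  have hEne : E.Nonempty := hFne.image _
  set ε : ℝ := E.min' hEne with hεdef
  have hεpos : 0 < ε := by
    have hmem := E.min'_mem hEne
    obtain ⟨S, hSF, hval⟩ := Finset.mem_image.mp hmem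
    have hkS : k ∈ S := (Finset.mem_filter.mp hSF).2
    have := hnt S hkS
    rw [hεdef, ← hval]
    linarith
  have hεle : ∀ S : Finset V, k ∈ S → ε ≤ fS G D S - ∑ i ∈ S, r i := by
    intro S hk
    apply Finset.min'_le
    rw [hE]
    exact Finset.mem_image.mpr ⟨S, Finset.mem_filter.mpr ⟨Finset.mem_powerset.mpr
      (Finset.subset_univ S), hk⟩, rfl⟩
  set r' : V → ℝ := Function.update r k (r k + ε) with hr'
  have hr'mem : r' ∈ polyA (fS G D) := by
    constructor
    · intro i
      by_cases hik : i = k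
      · subst hik
        rw [hr', Function.update_self]
        have := hr0 i
        linarith
      · rw [hr', Function.update_of_ne hik]
        exact hr0 i
    · intro S
      by_cases hk : k ∈ S
      · rw [hr', Finset.sum_update_of_mem hk]
        have hsplit : ∑ i ∈ S, r i = r k + ∑ i ∈ S \ {k}, r i := by
          rw [Finset.sum_eq_add_sum_sdiff_singleton_of_mem hk]
        have := hεle S hk
        linarith
      · have : ∑ i ∈ S, r' i = ∑ i ∈ S, r i := by
          apply Finset.sum_congr rfl
          intro i hi
          rw [hr', Function.update_of_ne (by rintro rfl; exact hk hi)]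
        rw [this]
        exact hfeas S
  have hrat : (fun i => r' i / D i) = Function.update (fun i => r i / D i) k ((r k + ε) / D k) := by
    funext i
    by_cases hik : i = k
    · subst hik
      rw [hr', Function.update_self, Function.update_self]
    · rw [hr', Function.update_of_ne hik, Function.update_of_ne hik]
  have hLLT : LLT (sortedVec (fun i => r i / D i)) (sortedVec (fun i => r' i / D i)) := by
    rw [hrat]
    apply LLT_update
    rw [div_lt_div_iff₀ (hD k) (hD k)]
    nlinarith [hD k]
  exact not_lexGE_of_LLT hLLT (hopt r' hr'mem)

/-- separation: if `ρ k < ρ w` there is a tight set containing `k` avoiding `w` -/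
lemma exists_tight_sep (hD : ∀ i, 0 < D i) (hlex : LexOptimal (polyA (fS G D)) D r) (k w : V)
    (hkw : r k / D k < r w / D w) :
    ∃ S : Finset V, Tight G D r S ∧ k ∈ S ∧ w ∉ S := by
  obtain ⟨⟨hr0, hfeas⟩, hopt⟩ := hlex
  by_contra hno
  push_neg at hno
  have hnt : ∀ S : Finset V, k ∈ S → w ∉ S → ∑ i ∈ S, r i < fS G D S := by
    intro S hk hw
    exact lt_of_le_of_ne (hfeas S) (fun h => hw (hno S h hk))
  have hwk : w ≠ k := by
    rintro rfl
    exact lt_irrefl _ hkw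
  set F : Finset (Finset V) := Finset.univ.powerset.filter (fun S => k ∈ S ∧ w ∉ S) with hF
  have hFne : F.Nonempty := ⟨{k}, by simp [hF, hwk]⟩
  set E : Finset ℝ := F.image (fun S => fS G D S - ∑ i ∈ S, r i) with hE
  have hEne : E.Nonempty := hFne.image _
  set gap : ℝ := r w - (r k / D k) * D w with hgap
  have hq : r k / D k * D k = r k := div_mul_cancel₀ _ (ne_of_gt (hD k))
  have hgappos : 0 < gap := by
    rw [hgap]
    have h := (div_lt_div_iff₀ (hD k) (hD w)).mp hkw
    nlinarith [hD w, hD k, hq]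
  set ε : ℝ := min (E.min' hEne) (gap / 2) with hεdef
  have hεpos : 0 < ε := by
    rw [hεdef]
    apply lt_min
    · have hmem := E.min'_mem hEne
      obtain ⟨S, hSF, hval⟩ := Finset.mem_image.mp hmem
      have hconds := (Finset.mem_filter.mp hSF).2
      have := hnt S hconds.1 hconds.2
      rw [← hval]
      linarith
    · exact half_pos hgappos
  have hεgap : ε < gap := by
    rw [hεdef]
    calc min (E.min' hEne) (gap / 2) ≤ gap / 2 := min_le_right _ _
    _ < gap := half_lt_self hgappos
  have hεle : ∀ S : Finset V, k ∈ S → w ∉ S → ε ≤ fS G D S - ∑ i ∈ S, r i := by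
    intro S hk hw
    calc ε ≤ E.min' hEne := by rw [hεdef]; exact min_le_left _ _
    _ ≤ fS G D S - ∑ i ∈ S, r i := by
        apply Finset.min'_le
        rw [hE]
        exact Finset.mem_image.mpr ⟨S, Finset.mem_filter.mpr ⟨Finset.mem_powerset.mpr
          (Finset.subset_univ S), hk, hw⟩, rfl⟩
  have hrw_pos : 0 ≤ r w - ε := by
    have h0 : 0 ≤ (r k / D k) * D w := by
      apply mul_nonneg
      · exact div_nonneg (hr0 k) (hD k).le
      · exact (hD w).le
    rw [hgap] at hεgap
    linarith
  set r' : V → ℝ := Function.update (Function.update r w (r w - ε)) k (r k + ε) with hr'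
  have hr'k : r' k = r k + ε := Function.update_self _ _ _
  have hr'w : r' w = r w - ε := by
    rw [hr', Function.update_of_ne hwk, Function.update_self]
  have hr'other : ∀ i, i ≠ k → i ≠ w → r' i = r i := by
    intro i h1 h2
    rw [hr', Function.update_of_ne h1, Function.update_of_ne h2]
  have hr'mem : r' ∈ polyA (fS G D) := by
    constructor
    · intro i
      by_cases h1 : i = k
      · subst h1; rw [hr'k]; have := hr0 i; linarith
      · by_cases h2 : i = w
        · subst h2; rw [hr'w]; linarith
        · rw [hr'other i h1 h2]; exact hr0 i
    · intro S
      by_cases hk : k ∈ S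
      · by_cases hw : w ∈ S
        · -- both: sum unchanged
          have hsum : ∑ i ∈ S, r' i = ∑ i ∈ S, r i := by
            rw [hr', Finset.sum_update_of_mem hk]
            have hw' : w ∈ S \ {k} := Finset.mem_sdiff.mpr ⟨hw, by simp [hwk]⟩
            rw [Finset.sum_update_of_mem hw']
            have e1 : ∑ i ∈ S, r i = r k + ∑ i ∈ S \ {k}, r i :=
              Finset.sum_eq_add_sum_sdiff_singleton_of_mem hk _
            have e2 : ∑ i ∈ S \ {k}, r i = r w + ∑ i ∈ (S \ {k}) \ {w}, r i :=
              Finset.sum_eq_add_sum_sdiff_singleton_of_mem hw' _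
            rw [e1, e2]; ring
          rw [hsum]; exact hfeas S
        · -- k in, w out : uses slack
          have hsum : ∑ i ∈ S, r' i = ε + ∑ i ∈ S, r i := by
            rw [hr', Finset.sum_update_of_mem hk]
            have : ∑ i ∈ S \ {k}, Function.update r w (r w - ε) i = ∑ i ∈ S \ {k}, r i := by
              apply Finset.sum_congr rfl
              intro i hi
              have hiw : i ≠ w := by
                rintro rfl
                exact hw (Finset.mem_sdiff.mp hi).1
              rw [Function.update_of_ne hiw]
            rw [this]
            have e1 : ∑ i ∈ S, r i = r k + ∑ i ∈ S \ {k}, r i :=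
              Finset.sum_eq_add_sum_sdiff_singleton_of_mem hk _
            rw [e1]; ring
          rw [hsum]
          have := hεle S hk hw
          linarith
      · -- k out
        have hsum : ∑ i ∈ S, r' i ≤ ∑ i ∈ S, r i := by
          apply Finset.sum_le_sum
          intro i hi
          by_cases h2 : i = w
          · subst h2; rw [hr'w]; linarith
          · rw [hr'other i (by rintro rfl; exact hk hi) h2]
        exact le_trans hsum (hfeas S)
  have hrat : (fun i => r' i / D i) =
      Function.update (Function.update (fun i => r i / D i) w ((r w - ε) / D w)) k
        ((r k + ε) / D k) := by
    funext i
    by_cases h1 : i = k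
    · subst h1
      rw [Function.update_self, hr'k]
    · rw [Function.update_of_ne h1]
      by_cases h2 : i = w
      · subst h2
        rw [Function.update_self, hr'w]
      · rw [Function.update_of_ne h2, hr'other i h1 h2]
  have hLLT : LLT (sortedVec (fun i => r i / D i)) (sortedVec (fun i => r' i / D i)) := by
    rw [hrat]
    apply LLT_update2 _ k w hwk
    · rw [div_lt_div_iff₀ (hD k) (hD k)]
      nlinarith [hD k]
    · rw [div_lt_div_iff₀ (hD k) (hD w)]
      rw [hgap] at hεgap
      nlinarith [hD w, hD k, hq, mul_pos (hD w) (hD k)]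
    · exact hkw
  exact not_lexGE_of_LLT hLLT (hopt r' hr'mem)

end Perturb


section Struct

variable {V : Type*} [Fintype V] [DecidableEq V]
variable (G : SimpleGraph V) [DecidableRel G.Adj] (D : V → ℝ) (r : V → ℝ)

/-- minimum sharing ratio among the neighbors of `z` -/
def mnr (hniso : ∀ i, (G.neighborFinset i).Nonempty) (z : V) : ℝ :=
  ((G.neighborFinset z).image (fun i => r i / D i)).min' ((hniso z).image _)

lemma mnr_le (hniso : ∀ i, (G.neighborFinset i).Nonempty) {z y : V} (h : G.Adj z y) : mnr G D r hniso z ≤ r y / D y := by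
  apply Finset.min'_le
  exact Finset.mem_image.mpr ⟨y, (SimpleGraph.mem_neighborFinset _ _ _).mpr h, rfl⟩

lemma exists_mnr (hniso : ∀ i, (G.neighborFinset i).Nonempty) (z : V) : ∃ y, G.Adj z y ∧ r y / D y = mnr G D r hniso z := by
  have := Finset.min'_mem ((G.neighborFinset z).image (fun i => r i / D i)) ((hniso z).image _)
  obtain ⟨y, hy, hval⟩ := Finset.mem_image.mp this
  exact ⟨y, (SimpleGraph.mem_neighborFinset _ _ _).mp hy, hval⟩

lemma mem_nbrs_lt (hniso : ∀ i, (G.neighborFinset i).Nonempty) (t : ℝ) (z : V) :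
    z ∈ nbrs G (Finset.univ.filter (fun i => r i / D i < t)) ↔ mnr G D r hniso z < t := by
  rw [mem_nbrs]
  constructor
  · rintro ⟨i, hi, hadj⟩
    have hlt : r i / D i < t := (Finset.mem_filter.mp hi).2
    exact lt_of_le_of_lt (mnr_le G D r hniso hadj.symm) hlt
  · intro h
    obtain ⟨y, hadj, hval⟩ := exists_mnr G D r hniso z
    refine ⟨y, Finset.mem_filter.mpr ⟨Finset.mem_univ _, by rw [hval]; exact h⟩, hadj.symm⟩

lemma mem_nbrs_le (hniso : ∀ i, (G.neighborFinset i).Nonempty) (t : ℝ) (z : V) :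
    z ∈ nbrs G (Finset.univ.filter (fun i => r i / D i ≤ t)) ↔ mnr G D r hniso z ≤ t := by
  rw [mem_nbrs]
  constructor
  · rintro ⟨i, hi, hadj⟩
    have hlt : r i / D i ≤ t := (Finset.mem_filter.mp hi).2
    exact le_trans (mnr_le G D r hniso hadj.symm) hlt
  · intro h
    obtain ⟨y, hadj, hval⟩ := exists_mnr G D r hniso z
    refine ⟨y, Finset.mem_filter.mpr ⟨Finset.mem_univ _, by rw [hval]; exact h⟩, hadj.symm⟩

lemma nbrs_lowerset_lt (hniso : ∀ i, (G.neighborFinset i).Nonempty) (t : ℝ) :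
    nbrs G (Finset.univ.filter (fun i => r i / D i < t)) =
      Finset.univ.filter (fun z => mnr G D r hniso z < t) := by
  ext z
  rw [mem_nbrs_lt G D r hniso t z, Finset.mem_filter]
  simp

lemma nbrs_lowerset_le (hniso : ∀ i, (G.neighborFinset i).Nonempty) (t : ℝ) :
    nbrs G (Finset.univ.filter (fun i => r i / D i ≤ t)) =
      Finset.univ.filter (fun z => mnr G D r hniso z ≤ t) := by
  ext z
  rw [mem_nbrs_le G D r hniso t z, Finset.mem_filter]
  simp

/-- intersection of separating tight sets over a finite family -/
lemma tight_inter_family (hD : ∀ i, 0 < D i) (hlex : LexOptimal (polyA (fS G D)) D r) (k : V) (F : Finset V)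
    (hsep : ∀ x ∈ F, r k / D k < r x / D x) :
    ∃ T : Finset V, Tight G D r T ∧ k ∈ T ∧ ∀ x ∈ F, x ∉ T := by
  classical
  induction F using Finset.induction_on with
  | empty =>
    obtain ⟨T, hT, hk⟩ := exists_tight_mem G D r hD hlex k
    exact ⟨T, hT, hk, by simp⟩
  | @insert x F hx ih =>
    obtain ⟨T, hT, hkT, havoid⟩ := ih (fun y hy => hsep y (Finset.mem_insert_of_mem hy))
    obtain ⟨S, hS, hkS, hxS⟩ := exists_tight_sep G D r hD hlex k x
      (hsep x (Finset.mem_insert_self x F))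
    refine ⟨T ∩ S, tight_inter G D r hD hlex.1.2 hT hS, Finset.mem_inter.mpr ⟨hkT, hkS⟩, ?_⟩
    intro y hy hyT
    rcases Finset.mem_insert.mp hy with rfl | hyF
    · exact hxS (Finset.mem_inter.mp hyT).2
    · exact havoid y hyF (Finset.mem_inter.mp hyT).1

lemma tight_union_family (hD : ∀ i, 0 < D i) (hlex : LexOptimal (polyA (fS G D)) D r) (F W : Finset V)
    (h : ∀ k ∈ F, ∃ T : Finset V, Tight G D r T ∧ k ∈ T ∧ T ⊆ W) :
    ∃ T : Finset V, Tight G D r T ∧ F ⊆ T ∧ T ⊆ W := by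
  classical
  induction F using Finset.induction_on with
  | empty =>
    refine ⟨∅, ?_, by simp, by simp⟩
    simp [Tight, fS, nbrs]
  | @insert x F hx ih =>
    obtain ⟨T, hT, hsub, hTW⟩ := ih (fun y hy => h y (Finset.mem_insert_of_mem hy))
    obtain ⟨S, hS, hxS, hSW⟩ := h x (Finset.mem_insert_self x F)
    refine ⟨T ∪ S, tight_union G D r hD hlex.1.2 hT hS, ?_, Finset.union_subset hTW hSW⟩
    intro y hy
    rcases Finset.mem_insert.mp hy with rfl | hyF
    · exact Finset.mem_union_right _ hxS
    · exact Finset.mem_union_left _ (hsub hyF)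

lemma tight_lowerset_lt (hD : ∀ i, 0 < D i) (hlex : LexOptimal (polyA (fS G D)) D r) (t : ℝ) :
    Tight G D r (Finset.univ.filter (fun z => r z / D z < t)) := by
  classical
  set W := Finset.univ.filter (fun z => r z / D z < t) with hW
  have hcond : ∀ k ∈ W, ∃ T : Finset V, Tight G D r T ∧ k ∈ T ∧ T ⊆ W := by
    intro k hk
    have hkt : r k / D k < t := (Finset.mem_filter.mp hk).2
    obtain ⟨T, hT, hkT, havoid⟩ := tight_inter_family G D r hD hlex k
      (Finset.univ.filter (fun x => ¬ (r x / D x < t)))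
      (by
        intro x hx
        have := (Finset.mem_filter.mp hx).2
        push_neg at this
        exact lt_of_lt_of_le hkt this)
    refine ⟨T, hT, hkT, ?_⟩
    intro z hz
    rw [hW, Finset.mem_filter]
    refine ⟨Finset.mem_univ _, ?_⟩
    by_contra hzc
    exact havoid z (Finset.mem_filter.mpr ⟨Finset.mem_univ _, hzc⟩) hz
  obtain ⟨T, hT, hsub, hTW⟩ := tight_union_family G D r hD hlex W W hcond
  have : T = W := Finset.Subset.antisymm hTW hsub
  rwa [this] at hT

lemma tight_lowerset_le (hD : ∀ i, 0 < D i) (hlex : LexOptimal (polyA (fS G D)) D r) (t : ℝ) :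
    Tight G D r (Finset.univ.filter (fun z => r z / D z ≤ t)) := by
  classical
  set W := Finset.univ.filter (fun z => r z / D z ≤ t) with hW
  have hcond : ∀ k ∈ W, ∃ T : Finset V, Tight G D r T ∧ k ∈ T ∧ T ⊆ W := by
    intro k hk
    have hkt : r k / D k ≤ t := (Finset.mem_filter.mp hk).2
    obtain ⟨T, hT, hkT, havoid⟩ := tight_inter_family G D r hD hlex k
      (Finset.univ.filter (fun x => ¬ (r x / D x ≤ t)))
      (by
        intro x hx
        have := (Finset.mem_filter.mp hx).2
        push_neg at this
        exact lt_of_le_of_lt hkt this)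
    refine ⟨T, hT, hkT, ?_⟩
    intro z hz
    rw [hW, Finset.mem_filter]
    refine ⟨Finset.mem_univ _, ?_⟩
    by_contra hzc
    exact havoid z (Finset.mem_filter.mpr ⟨Finset.mem_univ _, hzc⟩) hz
  obtain ⟨T, hT, hsub, hTW⟩ := tight_union_family G D r hD hlex W W hcond
  have : T = W := Finset.Subset.antisymm hTW hsub
  rwa [this] at hT

/-- all sharing ratios are strictly positive at a lex optimum -/
lemma ratio_pos (hniso : ∀ i, (G.neighborFinset i).Nonempty) (hD : ∀ i, 0 < D i) (hlex : LexOptimal (polyA (fS G D)) D r) : ∀ z, 0 < r z / D z := by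
  intro z
  by_contra hz
  push_neg at hz
  have hr0 : ∀ i, 0 ≤ r i := hlex.1.1
  -- choose `t` strictly between 0 and every positive ratio
  classical
  set P : Finset ℝ := (Finset.univ.image (fun i => r i / D i)).filter (fun c => 0 < c) with hP
  set t : ℝ := if h : P.Nonempty then P.min' h else 1 with ht
  have htpos : 0 < t := by
    rw [ht]
    split_ifs with h
    · have := Finset.min'_mem P h
      exact (Finset.mem_filter.mp this).2
    · norm_num
  have htle : ∀ i : V, 0 < r i / D i → t ≤ r i / D i := by
    intro i hi
    have hmem : (r i / D i) ∈ P := Finset.mem_filter.mpr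
      ⟨Finset.mem_image.mpr ⟨i, Finset.mem_univ _, rfl⟩, hi⟩
    rw [ht]
    split_ifs with h
    · exact Finset.min'_le _ _ hmem
    · exact absurd ⟨_, hmem⟩ h
  set W := Finset.univ.filter (fun x => r x / D x < t) with hWdef
  have hzW : z ∈ W := by
    rw [hWdef, Finset.mem_filter]
    exact ⟨Finset.mem_univ _, lt_of_le_of_lt hz htpos⟩
  have htight : Tight G D r W := tight_lowerset_lt G D r hD hlex t
  have hRzero : ∑ i ∈ W, r i = 0 := by
    apply Finset.sum_eq_zero
    intro i hi
    have hilt : r i / D i < t := (Finset.mem_filter.mp hi).2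
    by_contra hne
    have hipos : 0 < r i := lt_of_le_of_ne (hr0 i) (Ne.symm hne)
    have : 0 < r i / D i := div_pos hipos (hD i)
    exact absurd hilt (not_lt.mpr (htle i this))
  have hfpos : 0 < fS G D W := by
    obtain ⟨y, hy⟩ := hniso z
    have hymem : y ∈ nbrs G W :=
      (mem_nbrs G).mpr ⟨z, hzW, (SimpleGraph.mem_neighborFinset _ _ _).mp hy⟩
    rw [fS]
    apply Finset.sum_pos' (fun i _ => (hD i).le)
    exact ⟨y, hymem, hD y⟩
  rw [Tight, hRzero] at htight
  linarith

/-- the level identity `t · D(L_t) = D(S_t)` -/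
lemma level_identity (hniso : ∀ i, (G.neighborFinset i).Nonempty) (hD : ∀ i, 0 < D i) (hlex : LexOptimal (polyA (fS G D)) D r) (t : ℝ) :
    t * ∑ i ∈ Finset.univ.filter (fun z => r z / D z = t), D i =
      ∑ i ∈ Finset.univ.filter (fun z => mnr G D r hniso z = t), D i := by
  classical
  set Wlt := Finset.univ.filter (fun z => r z / D z < t) with hWlt
  set Wle := Finset.univ.filter (fun z => r z / D z ≤ t) with hWle
  set L := Finset.univ.filter (fun z => r z / D z = t) with hL
  have hsplit : Wle = Wlt ∪ L := by
    ext x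
    simp only [hWle, hWlt, hL, Finset.mem_filter, Finset.mem_union, Finset.mem_univ, true_and]
    exact le_iff_lt_or_eq
  have hdisj : Disjoint Wlt L := by
    rw [Finset.disjoint_left]
    intro x hx hx'
    have h1 := (Finset.mem_filter.mp hx).2
    have h2 := (Finset.mem_filter.mp hx').2
    rw [h2] at h1
    exact lt_irrefl _ h1
  have hRsplit : ∑ i ∈ Wle, r i = ∑ i ∈ Wlt, r i + ∑ i ∈ L, r i := by
    rw [hsplit, Finset.sum_union hdisj]
  have hRL : ∑ i ∈ L, r i = t * ∑ i ∈ L, D i := by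
    rw [Finset.mul_sum]
    apply Finset.sum_congr rfl
    intro i hi
    have h := (Finset.mem_filter.mp hi).2
    rw [div_eq_iff (ne_of_gt (hD i))] at h
    rw [h]
  -- neighbor side
  set Slt := Finset.univ.filter (fun z => mnr G D r hniso z < t) with hSlt
  set Sle := Finset.univ.filter (fun z => mnr G D r hniso z ≤ t) with hSle
  set Seq := Finset.univ.filter (fun z => mnr G D r hniso z = t) with hSeq
  have hsplit2 : Sle = Slt ∪ Seq := by
    ext x
    simp only [hSle, hSlt, hSeq, Finset.mem_filter, Finset.mem_union, Finset.mem_univ, true_and]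
    exact le_iff_lt_or_eq
  have hdisj2 : Disjoint Slt Seq := by
    rw [Finset.disjoint_left]
    intro x hx hx'
    have h1 := (Finset.mem_filter.mp hx).2
    have h2 := (Finset.mem_filter.mp hx').2
    rw [h2] at h1
    exact lt_irrefl _ h1
  have hDsplit : ∑ i ∈ Sle, D i = ∑ i ∈ Slt, D i + ∑ i ∈ Seq, D i := by
    rw [hsplit2, Finset.sum_union hdisj2]
  have ht1 : ∑ i ∈ Wlt, r i = ∑ i ∈ Slt, D i := by
    have := tight_lowerset_lt G D r hD hlex t
    rw [Tight] at this
    rw [hWlt, this, fS, nbrs_lowerset_lt G D r hniso t, ← hSlt]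
  have ht2 : ∑ i ∈ Wle, r i = ∑ i ∈ Sle, D i := by
    have := tight_lowerset_le G D r hD hlex t
    rw [Tight] at this
    rw [hWle, this, fS, nbrs_lowerset_le G D r hniso t, ← hSle]
  rw [← hRL]
  linarith

/-- static Hall bound: a set of suppliers committed to level `t` has endowment at most
`t` times the endowment of the level-`t` receivers it can reach. -/
lemma hall_bound (hniso : ∀ i, (G.neighborFinset i).Nonempty) (hD : ∀ i, 0 < D i) (hlex : LexOptimal (polyA (fS G D)) D r) (t : ℝ) (B : Finset V) (hB : ∀ z ∈ B, mnr G D r hniso z = t) :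
    ∑ i ∈ B, D i ≤
      t * ∑ i ∈ (Finset.univ.filter (fun z => r z / D z = t)) ∩ nbrs G B, D i := by
  classical
  set L := Finset.univ.filter (fun z => r z / D z = t) with hL
  set W := Finset.univ.filter (fun z => r z / D z < t) with hW
  set Y := L \ nbrs G B with hY
  set Seq := Finset.univ.filter (fun z => mnr G D r hniso z = t) with hSeq
  have hdisj : Disjoint W Y := by
    rw [Finset.disjoint_left]
    intro x hx hx'
    have h1 := (Finset.mem_filter.mp hx).2
    have h2 := (Finset.mem_filter.mp (Finset.mem_sdiff.mp hx').1).2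
    rw [h2] at h1
    exact lt_irrefl _ h1
  have hfeas := hlex.1.2
  have hWY := hfeas (W ∪ Y)
  have hsum : ∑ i ∈ W ∪ Y, r i = ∑ i ∈ W, r i + ∑ i ∈ Y, r i := Finset.sum_union hdisj
  have hRY : ∑ i ∈ Y, r i = t * ∑ i ∈ Y, D i := by
    rw [Finset.mul_sum]
    apply Finset.sum_congr rfl
    intro i hi
    have h := (Finset.mem_filter.mp (Finset.mem_sdiff.mp hi).1).2
    rw [div_eq_iff (ne_of_gt (hD i))] at h
    rw [h]
  have hf : fS G D (W ∪ Y) = fS G D W + ∑ i ∈ nbrs G Y \ nbrs G W, D i := by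
    rw [fS, nbrs_union, fS]
    rw [← Finset.union_sdiff_self_eq_union]
    exact Finset.sum_union Finset.disjoint_sdiff
  have htightW := tight_lowerset_lt G D r hD hlex t
  rw [Tight] at htightW
  rw [← hW] at htightW
  have hineq : t * ∑ i ∈ Y, D i ≤ ∑ i ∈ nbrs G Y \ nbrs G W, D i := by
    rw [hf] at hWY
    rw [hsum, hRY] at hWY
    rw [htightW] at hWY
    linarith
  -- nbrs Y \ nbrs W ⊆ Seq \ B
  have hsubset : nbrs G Y \ nbrs G W ⊆ Seq \ B := by
    intro z hz
    obtain ⟨hzY, hzW⟩ := Finset.mem_sdiff.mp hz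
    obtain ⟨y, hyY, hadj⟩ := (mem_nbrs G).mp hzY
    have hyL : y ∈ L := (Finset.mem_sdiff.mp hyY).1
    have hyNB : y ∉ nbrs G B := (Finset.mem_sdiff.mp hyY).2
    have hmle : mnr G D r hniso z ≤ t := by
      have := mnr_le G D r hniso hadj.symm
      rw [(Finset.mem_filter.mp hyL).2] at this
      exact this
    have hmge : ¬ mnr G D r hniso z < t := by
      intro hcon
      exact hzW ((mem_nbrs_lt G D r hniso t z).mpr hcon)
    have hmeq : mnr G D r hniso z = t := le_antisymm hmle (not_lt.mp hmge)
    refine Finset.mem_sdiff.mpr ⟨Finset.mem_filter.mpr ⟨Finset.mem_univ _, hmeq⟩, ?_⟩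
    intro hzB
    exact hyNB ((mem_nbrs G).mpr ⟨z, hzB, hadj.symm⟩)
  have hBsub : B ⊆ Seq := by
    intro z hz
    exact Finset.mem_filter.mpr ⟨Finset.mem_univ _, hB z hz⟩
  have hDS : ∑ i ∈ Seq \ B, D i + ∑ i ∈ B, D i = ∑ i ∈ Seq, D i :=
    Finset.sum_sdiff hBsub
  have hid := level_identity G D r hniso hD hlex t
  rw [← hL, ← hSeq] at hid
  have hYL : Y ⊆ L := Finset.sdiff_subset
  have hDL : ∑ i ∈ L \ Y, D i + ∑ i ∈ Y, D i = ∑ i ∈ L, D i := Finset.sum_sdiff hYL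
  have hLY : L \ Y = L ∩ nbrs G B := by
    rw [hY]
    ext x
    simp only [Finset.mem_sdiff, Finset.mem_inter, not_and, not_not]
    tauto
  have hmono : ∑ i ∈ nbrs G Y \ nbrs G W, D i ≤ ∑ i ∈ Seq \ B, D i :=
    Finset.sum_le_sum_of_subset_of_nonneg hsubset (fun i _ _ => (hD i).le)
  rw [← hLY]
  have hDLt : t * (∑ i ∈ L \ Y, D i) + t * (∑ i ∈ Y, D i) = t * (∑ i ∈ L, D i) := by
    rw [← mul_add, hDL]
  linarith

/-- KEY: at a lex optimum every node satisfies `ρ_z · v(z) ≥ 1`. -/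
lemma phi_ge_one (hniso : ∀ i, (G.neighborFinset i).Nonempty) (hD : ∀ i, 0 < D i) (hlex : LexOptimal (polyA (fS G D)) D r) : ∀ z, 1 ≤ (r z / D z) * mnr G D r hniso z := by
  classical
  by_contra hcon
  push_neg at hcon
  obtain ⟨z₀, hz₀⟩ := hcon
  set U : Finset V := Finset.univ.filter (fun z => (r z / D z) * mnr G D r hniso z < 1) with hU
  have hUne : U.Nonempty := ⟨z₀, Finset.mem_filter.mpr ⟨Finset.mem_univ _, hz₀⟩⟩
  set I : Finset ℝ := U.image (mnr G D r hniso) with hI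
  have hmaps : ∀ z ∈ U, mnr G D r hniso z ∈ I := fun z hz =>
    Finset.mem_image.mpr ⟨z, hz, rfl⟩
  have hrpos : ∀ i, 0 < r i / D i := ratio_pos G D r hniso hD hlex
  have hmnrpos : ∀ z : V, 0 < mnr G D r hniso z := by
    intro z
    obtain ⟨y, _, hval⟩ := exists_mnr G D r hniso z
    rw [← hval]
    exact hrpos y
  have htpos : ∀ t ∈ I, 0 < t := by
    intro t ht
    obtain ⟨z, _, hval⟩ := Finset.mem_image.mp ht
    rw [← hval]
    exact hmnrpos z
  -- fibers
  have hkey : ∀ t ∈ I,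
      ∑ i ∈ U.filter (fun z => mnr G D r hniso z = t), D i ≤
        t * ∑ i ∈ U.filter (fun y => r y / D y = t), D i := by
    intro t ht
    have htp := htpos t ht
    set B := U.filter (fun z => mnr G D r hniso z = t) with hB
    have hBprop : ∀ z ∈ B, mnr G D r hniso z = t := fun z hz => (Finset.mem_filter.mp hz).2
    have hHall := hall_bound G D r hniso hD hlex t B hBprop
    refine le_trans hHall ?_
    have hsub : (Finset.univ.filter (fun z => r z / D z = t)) ∩ nbrs G B ⊆
        U.filter (fun y => r y / D y = t) := by
      intro y hy
      obtain ⟨hyL, hyN⟩ := Finset.mem_inter.mp hy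
      have hyt : r y / D y = t := (Finset.mem_filter.mp hyL).2
      obtain ⟨zb, hzbB, hadj⟩ := (mem_nbrs G).mp hyN
      have hzbU : zb ∈ U := (Finset.mem_filter.mp hzbB).1
      have hzbt : mnr G D r hniso zb = t := (Finset.mem_filter.mp hzbB).2
      have hzbbad : (r zb / D zb) * mnr G D r hniso zb < 1 := (Finset.mem_filter.mp hzbU).2
      rw [hzbt] at hzbbad
      -- mnr y ≤ ρ zb
      have hmy : mnr G D r hniso y ≤ r zb / D zb := mnr_le G D r hniso hadj.symm
      have hybad : (r y / D y) * mnr G D r hniso y < 1 := by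
        rw [hyt]
        calc t * mnr G D r hniso y ≤ t * (r zb / D zb) :=
              mul_le_mul_of_nonneg_left hmy htp.le
        _ = r zb / D zb * t := by ring
        _ < 1 := hzbbad
      exact Finset.mem_filter.mpr ⟨Finset.mem_filter.mpr ⟨Finset.mem_univ _, hybad⟩, hyt⟩
    have := Finset.sum_le_sum_of_subset_of_nonneg hsub (fun i _ _ => (hD i).le)
    exact mul_le_mul_of_nonneg_left this htp.le
  -- chain A : D(U) ≤ R(U)
  have hDU : ∑ z ∈ U, D z = ∑ t ∈ I, ∑ z ∈ U.filter (fun z => mnr G D r hniso z = t), D z :=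
    (Finset.sum_fiberwise_of_maps_to hmaps D).symm
  have hfibC : ∀ t ∈ I, t * ∑ i ∈ U.filter (fun y => r y / D y = t), D i =
      ∑ i ∈ U.filter (fun y => r y / D y = t), r i := by
    intro t ht
    rw [Finset.mul_sum]
    apply Finset.sum_congr rfl
    intro i hi
    have h := (Finset.mem_filter.mp hi).2
    rw [div_eq_iff (ne_of_gt (hD i))] at h
    rw [h]
  have hCbound : ∑ t ∈ I, ∑ i ∈ U.filter (fun y => r y / D y = t), r i ≤ ∑ i ∈ U, r i := by
    rw [← Finset.sum_biUnion]
    · apply Finset.sum_le_sum_of_subset_of_nonneg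
      · intro y hy
        obtain ⟨t, _, hyt⟩ := Finset.mem_biUnion.mp hy
        exact (Finset.mem_filter.mp hyt).1
      · intro i _ _
        exact hlex.1.1 i
    · intro a _ b _ hab
      simp only [Function.onFun]
      rw [Finset.disjoint_left]
      intro x hx hx'
      exact hab (((Finset.mem_filter.mp hx).2.symm).trans (Finset.mem_filter.mp hx').2)
  have hA : ∑ z ∈ U, D z ≤ ∑ i ∈ U, r i := by
    calc ∑ z ∈ U, D z
        = ∑ t ∈ I, ∑ z ∈ U.filter (fun z => mnr G D r hniso z = t), D z := hDU
      _ ≤ ∑ t ∈ I, t * ∑ i ∈ U.filter (fun y => r y / D y = t), D i :=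
          Finset.sum_le_sum hkey
      _ = ∑ t ∈ I, ∑ i ∈ U.filter (fun y => r y / D y = t), r i :=
          Finset.sum_congr rfl hfibC
      _ ≤ ∑ i ∈ U, r i := hCbound
  -- chain B : ∑ D/mnr ≤ D(U)
  have hDfib : ∑ z ∈ U, D z / mnr G D r hniso z =
      ∑ t ∈ I, ∑ z ∈ U.filter (fun z => mnr G D r hniso z = t), D z / mnr G D r hniso z :=
    (Finset.sum_fiberwise_of_maps_to hmaps _).symm
  have hfibB : ∀ t ∈ I,
      ∑ z ∈ U.filter (fun z => mnr G D r hniso z = t), D z / mnr G D r hniso z ≤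
        ∑ i ∈ U.filter (fun y => r y / D y = t), D i := by
    intro t ht
    have htp := htpos t ht
    have h1 : ∑ z ∈ U.filter (fun z => mnr G D r hniso z = t), D z / mnr G D r hniso z =
        (∑ z ∈ U.filter (fun z => mnr G D r hniso z = t), D z) / t := by
      rw [Finset.sum_div]
      apply Finset.sum_congr rfl
      intro i hi
      rw [(Finset.mem_filter.mp hi).2]
    rw [h1, div_le_iff₀ htp]
    calc ∑ z ∈ U.filter (fun z => mnr G D r hniso z = t), D z
        ≤ t * ∑ i ∈ U.filter (fun y => r y / D y = t), D i := hkey t ht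
      _ = (∑ i ∈ U.filter (fun y => r y / D y = t), D i) * t := by ring
  have hDbound : ∑ t ∈ I, ∑ i ∈ U.filter (fun y => r y / D y = t), D i ≤ ∑ i ∈ U, D i := by
    rw [← Finset.sum_biUnion]
    · apply Finset.sum_le_sum_of_subset_of_nonneg
      · intro y hy
        obtain ⟨t, _, hyt⟩ := Finset.mem_biUnion.mp hy
        exact (Finset.mem_filter.mp hyt).1
      · intro i _ _
        exact (hD i).le
    · intro a _ b _ hab
      simp only [Function.onFun]
      rw [Finset.disjoint_left]
      intro x hx hx'
      exact hab (((Finset.mem_filter.mp hx).2.symm).trans (Finset.mem_filter.mp hx').2)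
  have hB : ∑ z ∈ U, D z / mnr G D r hniso z ≤ ∑ z ∈ U, D z := by
    calc ∑ z ∈ U, D z / mnr G D r hniso z
        = ∑ t ∈ I, ∑ z ∈ U.filter (fun z => mnr G D r hniso z = t),
            D z / mnr G D r hniso z := hDfib
      _ ≤ ∑ t ∈ I, ∑ i ∈ U.filter (fun y => r y / D y = t), D i :=
          Finset.sum_le_sum hfibB
      _ ≤ ∑ z ∈ U, D z := hDbound
  -- chain C : R(U) < ∑ D/mnr
  have hC : ∑ i ∈ U, r i < ∑ z ∈ U, D z / mnr G D r hniso z := by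
    apply Finset.sum_lt_sum_of_nonempty hUne
    intro z hz
    have hbad : (r z / D z) * mnr G D r hniso z < 1 := (Finset.mem_filter.mp hz).2
    have hq : r z / D z * D z = r z := div_mul_cancel₀ _ (ne_of_gt (hD z))
    rw [lt_div_iff₀ (hmnrpos z)]
    nlinarith [hD z, hmnrpos z, hbad, hq]
  linarith

end Struct

end Aux

end SharingEcon
namespace SharingEcon

/-- if `r ∈ A` is lex-optimal, then for every edge `(i,j) ∈ E` the sharing ratios
of its endpoints satisfy `ρ_i(r) · ρ_j(r) ≥ 1`; equivalently, for every node `i` and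
every neighbor `j ∈ N_i`, `ρ_j(r) ≥ 1/ρ_i(r)`. -/
theorem lexopt_edge_ratio_bound {V : Type*} [Fintype V] [DecidableEq V]
    (G : SimpleGraph V) [DecidableRel G.Adj]
    (hconn : G.Connected) (hniso : ∀ i, (G.neighborFinset i).Nonempty)
    (D : V → ℝ) (hD : ∀ i, 0 < D i)
    (r : V → ℝ) (hlex : LexOptimal (polyA (fS G D)) D r) :
    (∀ i j, G.Adj i j → 1 ≤ ratio D r i * ratio D r j) ∧
    (∀ i j, G.Adj i j → 1 / ratio D r i ≤ ratio D r j) := by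
  have hphi := phi_ge_one G D r hniso hD hlex
  have hpos := ratio_pos G D r hniso hD hlex
  have hmain : ∀ i j, G.Adj i j → 1 ≤ ratio D r i * ratio D r j := by
    intro i j hadj
    have h1 : mnr G D r hniso i ≤ r j / D j := mnr_le G D r hniso hadj
    calc (1 : ℝ) ≤ (r i / D i) * mnr G D r hniso i := hphi i
      _ ≤ (r i / D i) * (r j / D j) := mul_le_mul_of_nonneg_left h1 (hpos i).le
      _ = ratio D r i * ratio D r j := rfl
  refine ⟨hmain, ?_⟩
  intro i j hadj
  have hposi : 0 < ratio D r i := hpos i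
  rw [div_le_iff₀ hposi]
  calc (1 : ℝ) ≤ ratio D r i * ratio D r j := hmain i j hadj
    _ = ratio D r j * ratio D r i := by ring

end SharingEcon
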